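/- Let A ∈ ℝ^{n×n}, B ∈ ℝ^{n×m}, C ∈ ℝ^{p×n}, D ∈ ℝ^{p×m}, let Y ⊆ ℝᵖ be a convex cone, and define the convex process H : ℝⁿ ⇉ ℝⁿ by H(x) = {Ax + Bu : u ∈ ℝᵐ, Cx + Du ∈ Y}. If im[C D] + Y (the sum of the column space of the block matrix [C D] with Y) is a linear subspace of ℝᵖ, then the negative dual process satisfies H⁻(x) = {Aᵀx + Cᵀu : u ∈ Y⁺, Bᵀx + Dᵀu = 0} for every x ∈ ℝⁿ. -/

import Mathlib

open Pointwise Matrix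

namespace ConvexProcessPaper

/-- A convex cone: a nonempty convex set closed under nonnegative scalar multiplication. -/
def IsConvexCone {V : Type*} [AddCommMonoid V] [Module ℝ V] (S : Set V) : Prop :=
  S.Nonempty ∧ Convex ℝ S ∧ ∀ c : ℝ, 0 ≤ c → ∀ x ∈ S, c • x ∈ S

/-- A set is a linear subspace. -/
def IsLinearSubspace {V : Type*} [AddCommGroup V] [Module ℝ V] (S : Set V) : Prop :=
  ∃ W : Submodule ℝ V, (W : Set V) = S

/-- The negative dual process of a set-valued map on ℝⁿ:
p ∈ H⁻(q) ⇔ ⟨p,x⟩ ≥ ⟨q,y⟩ for all (x,y) ∈ gr(H). -/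
def negDual {n : ℕ} (H : (Fin n → ℝ) → Set (Fin n → ℝ)) : (Fin n → ℝ) → Set (Fin n → ℝ) :=
  fun q => {p | ∀ x y, y ∈ H x → q ⬝ᵥ y ≤ p ⬝ᵥ x}

/-- The positive polar cone of a set in ℝᵖ. -/
def posPolar {p : ℕ} (C : Set (Fin p → ℝ)) : Set (Fin p → ℝ) :=
  {y | ∀ x ∈ C, 0 ≤ x ⬝ᵥ y}

/-!
Weak duality gives `⊇`. For `⊆`, membership of `z` in `H⁻(x)` says that the linear functional
`(x', u') ↦ ⟨z - Aᵀx, x'⟩ - ⟨Bᵀx, u'⟩` is nonnegative on the preimage of `Y` under `L = [C D]`.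
Since `im L + Y` is a subspace `W`, every point of `W` can be pushed into `Y` by an element of
`im L`, which is exactly the hypothesis of M. Riesz's extension theorem on `W` with the cone `Y`:
the functional, transported to `im L`, extends to a functional on `W` that is nonnegative on `Y`.
Extending it further to `ℝᵖ` gives the multiplier `u ∈ Y⁺` with `Cᵀu = z - Aᵀx` and
`Dᵀu = -Bᵀx`.
-/

theorem dotProduct_mulVec_add_mulVec {R ι κ μ : Type*} [CommSemiring R] [Fintype ι] [Fintype κ]
    [Fintype μ] (C : Matrix μ ι R) (D : Matrix μ κ R) (v : μ → R) (x : ι → R) (u : κ → R) :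
    v ⬝ᵥ (C *ᵥ x + D *ᵥ u) = (Cᵀ *ᵥ v) ⬝ᵥ x + (Dᵀ *ᵥ v) ⬝ᵥ u := by
  rw [mulVec_transpose, mulVec_transpose, ← dotProduct_mulVec, ← dotProduct_mulVec, dotProduct_add]

theorem IsConvexCone.add_mem {V : Type*} [AddCommGroup V] [Module ℝ V] {S : Set V}
    (hS : IsConvexCone S) {x y : V} (hx : x ∈ S) (hy : y ∈ S) : x + y ∈ S := by
  have hmid : (1 / 2 : ℝ) • x + (1 / 2 : ℝ) • y ∈ S :=
    hS.2.1 hx hy (by norm_num) (by norm_num) (by norm_num)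
  simpa [smul_add, smul_smul] using hS.2.2 2 (by norm_num) _ hmid

def IsConvexCone.toPointedCone {V : Type*} [AddCommGroup V] [Module ℝ V] {S : Set V}
    (hS : IsConvexCone S) : PointedCone ℝ V where
  carrier := S
  add_mem' := hS.add_mem
  zero_mem' := by
    obtain ⟨x, hx⟩ := hS.1
    simpa using hS.2.2 0 le_rfl x hx
  smul_mem' c _ hx := hS.2.2 c c.2 _ hx

theorem PointedCone.exists_nonneg_comp_eq {E F : Type*} [AddCommGroup E] [Module ℝ E]
    [AddCommGroup F] [Module ℝ F] {L : E →ₗ[ℝ] F} {Y : PointedCone ℝ F} {W : Submodule ℝ F}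
    (hW : (W : Set F) = Set.range L + Y) {φ : E →ₗ[ℝ] ℝ} (hφ : ∀ e, L e ∈ Y → 0 ≤ φ e) :
    ∃ ψ : F →ₗ[ℝ] ℝ, (∀ y ∈ Y, 0 ≤ ψ y) ∧ ψ ∘ₗ L = φ := by
  have hLW : ∀ e, L e ∈ W := fun e => by
    rw [← SetLike.mem_coe, hW]
    exact ⟨L e, ⟨e, rfl⟩, 0, Y.zero_mem, add_zero _⟩
  set L' := L.codRestrict W hLW
  have hker : LinearMap.ker L' ≤ LinearMap.ker φ := fun e he => by
    have hLe : L e = 0 := congrArg Subtype.val (LinearMap.mem_ker.1 he)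
    refine LinearMap.mem_ker.2 (le_antisymm ?_ (hφ e (hLe ▸ Y.zero_mem)))
    simpa using hφ (-e) (by simp [hLe])
  let f : W →ₗ.[ℝ] ℝ :=
    ⟨LinearMap.range L', (LinearMap.ker L').liftQ φ hker ∘ₗ L'.quotKerEquivRange.symm.toLinearMap⟩
  have hf : ∀ e, f ⟨L' e, L'.mem_range_self e⟩ = φ e := fun e => by
    change (LinearMap.ker L').liftQ φ hker
      (L'.quotKerEquivRange.symm ⟨L' e, L'.mem_range_self e⟩) = φ e
    rw [LinearMap.quotKerEquivRange_symm_apply_image, Submodule.mkQ_apply, Submodule.liftQ_apply]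
  have hfY : ∀ x : f.domain, (x : W) ∈ Y.comap W.subtype → 0 ≤ f x := by
    rintro ⟨_, e, rfl⟩ he
    exact (hf e).symm ▸ hφ e he
  have hWY : ∀ y : W, ∃ x : f.domain, (x : W) + y ∈ Y.comap W.subtype := by
    rintro ⟨y, hy⟩
    rw [← SetLike.mem_coe, hW] at hy
    obtain ⟨_, ⟨e, rfl⟩, y', hy', rfl⟩ := hy
    refine ⟨⟨L' (-e), L'.mem_range_self (-e)⟩, ?_⟩
    simpa [PointedCone.mem_comap, L'] using hy'
  obtain ⟨g, hgf, hgY⟩ := riesz_extension (Y.comap W.subtype) f hfY hWY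
  obtain ⟨ψ, hψ⟩ := LinearMap.exists_extend g
  refine ⟨ψ, fun y hy => ?_, LinearMap.ext fun e => ?_⟩
  · have hyW : y ∈ W := by
      rw [← SetLike.mem_coe, hW]
      exact ⟨0, ⟨0, map_zero L⟩, y, hy, zero_add y⟩
    change 0 ≤ (ψ ∘ₗ W.subtype) ⟨y, hyW⟩
    rw [hψ]
    exact hgY _ hy
  · change (ψ ∘ₗ W.subtype) (L' e) = φ e
    rw [hψ, ← hf e]
    exact hgf ⟨L' e, L'.mem_range_self e⟩

theorem exists_mem_posPolar_of_nonneg {n m p : ℕ}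
    (C : Matrix (Fin p) (Fin n) ℝ) (D : Matrix (Fin p) (Fin m) ℝ)
    {Y : Set (Fin p → ℝ)} (hY : IsConvexCone Y)
    (hsub : IsLinearSubspace
      ({v | ∃ (x : Fin n → ℝ) (u : Fin m → ℝ), v = C *ᵥ x + D *ᵥ u} + Y))
    {w : Fin n → ℝ} {s : Fin m → ℝ}
    (hws : ∀ x u, C *ᵥ x + D *ᵥ u ∈ Y → 0 ≤ w ⬝ᵥ x + s ⬝ᵥ u) :
    ∃ u ∈ posPolar Y, Cᵀ *ᵥ u = w ∧ Dᵀ *ᵥ u = s := by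
  obtain ⟨W, hW⟩ := hsub
  set L := C.mulVecLin.coprod D.mulVecLin
  have hrange : Set.range L = {v | ∃ (x : Fin n → ℝ) (u : Fin m → ℝ), v = C *ᵥ x + D *ᵥ u} := by
    ext v
    simp [L, eq_comm]
  obtain ⟨ψ, hψY, hψL⟩ := PointedCone.exists_nonneg_comp_eq (L := L) (Y := hY.toPointedCone)
    (φ := (dotProductEquiv ℝ _ w).coprod (dotProductEquiv ℝ _ s)) (hW.trans (hrange ▸ rfl))
    (fun xu hxu => hws xu.1 xu.2 hxu)
  set v := (dotProductEquiv ℝ (Fin p)).symm ψ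
  have hψv : ∀ q, ψ q = v ⬝ᵥ q :=
    LinearMap.congr_fun ((dotProductEquiv ℝ (Fin p)).apply_symm_apply ψ).symm
  have hdual : ∀ x u, (Cᵀ *ᵥ v) ⬝ᵥ x + (Dᵀ *ᵥ v) ⬝ᵥ u = w ⬝ᵥ x + s ⬝ᵥ u := fun x u => by
    rw [← dotProduct_mulVec_add_mulVec, ← hψv]
    exact LinearMap.congr_fun hψL (x, u)
  refine ⟨v, fun y hy => dotProduct_comm v y ▸ hψv y ▸ hψY y hy, ?_, ?_⟩
  · refine dotProduct_eq _ _ fun x => ?_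
    simpa using hdual x 0
  · refine dotProduct_eq _ _ fun u => ?_
    simpa using hdual 0 u

theorem nonneg_iff_exists_mem_posPolar {n m p : ℕ}
    (C : Matrix (Fin p) (Fin n) ℝ) (D : Matrix (Fin p) (Fin m) ℝ)
    {Y : Set (Fin p → ℝ)} (hY : IsConvexCone Y)
    (hsub : IsLinearSubspace
      ({v | ∃ (x : Fin n → ℝ) (u : Fin m → ℝ), v = C *ᵥ x + D *ᵥ u} + Y))
    (w : Fin n → ℝ) (s : Fin m → ℝ) :
    (∀ x u, C *ᵥ x + D *ᵥ u ∈ Y → 0 ≤ w ⬝ᵥ x + s ⬝ᵥ u) ↔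
      ∃ u ∈ posPolar Y, Cᵀ *ᵥ u = w ∧ Dᵀ *ᵥ u = s := by
  refine ⟨exists_mem_posPolar_of_nonneg C D hY hsub, ?_⟩
  rintro ⟨v, hv, rfl, rfl⟩ x u hxu
  rw [← dotProduct_mulVec_add_mulVec, dotProduct_comm]
  exact hv _ hxu

theorem mem_negDual_iff {n m p : ℕ}
    (A : Matrix (Fin n) (Fin n) ℝ) (B : Matrix (Fin n) (Fin m) ℝ)
    (C : Matrix (Fin p) (Fin n) ℝ) (D : Matrix (Fin p) (Fin m) ℝ)
    {Y : Set (Fin p → ℝ)} {H : (Fin n → ℝ) → Set (Fin n → ℝ)}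
    (hH : ∀ x, H x = {y | ∃ u : Fin m → ℝ, y = A *ᵥ x + B *ᵥ u ∧ C *ᵥ x + D *ᵥ u ∈ Y})
    (x z : Fin n → ℝ) :
    z ∈ negDual H x ↔ ∀ x' u', C *ᵥ x' + D *ᵥ u' ∈ Y →
      0 ≤ (z - Aᵀ *ᵥ x) ⬝ᵥ x' + (-(Bᵀ *ᵥ x)) ⬝ᵥ u' := by
  have hineq : ∀ x' u', x ⬝ᵥ (A *ᵥ x' + B *ᵥ u') ≤ z ⬝ᵥ x' ↔
      0 ≤ (z - Aᵀ *ᵥ x) ⬝ᵥ x' + (-(Bᵀ *ᵥ x)) ⬝ᵥ u' := by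
    intro x' u'
    rw [dotProduct_mulVec_add_mulVec, sub_dotProduct, neg_dotProduct]
    constructor <;> intro h <;> linarith
  simp only [negDual, hH, Set.mem_ofPred_eq]
  constructor
  · intro hz x' u' hxu
    exact (hineq x' u').1 (hz x' _ ⟨u', rfl, hxu⟩)
  · rintro hz x' _ ⟨u', rfl, hxu⟩
    exact (hineq x' u').2 (hz x' u' hxu)

/-- dual of the constrained linear process
H(x) = {Ax + Bu : Cx + Du ∈ Y}, when im[C D] + Y is a subspace, is
H⁻(x) = {Aᵀx + Cᵀu : u ∈ Y⁺, Bᵀx + Dᵀu = 0}. -/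
theorem negDual_of_constrained_linear {n m p : ℕ}
    (A : Matrix (Fin n) (Fin n) ℝ) (B : Matrix (Fin n) (Fin m) ℝ)
    (C : Matrix (Fin p) (Fin n) ℝ) (D : Matrix (Fin p) (Fin m) ℝ)
    (Y : Set (Fin p → ℝ)) (hY : IsConvexCone Y)
    (H : (Fin n → ℝ) → Set (Fin n → ℝ))
    (hH : ∀ x, H x = {y | ∃ u : Fin m → ℝ, y = A *ᵥ x + B *ᵥ u ∧ C *ᵥ x + D *ᵥ u ∈ Y})
    (hsub : IsLinearSubspace
      ({v | ∃ (x : Fin n → ℝ) (u : Fin m → ℝ), v = C *ᵥ x + D *ᵥ u} + Y)) :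
    ∀ x : Fin n → ℝ, negDual H x =
      {z | ∃ u ∈ posPolar Y, z = Aᵀ *ᵥ x + Cᵀ *ᵥ u ∧ Bᵀ *ᵥ x + Dᵀ *ᵥ u = 0} := by
  intro x
  ext z
  rw [mem_negDual_iff A B C D hH, nonneg_iff_exists_mem_posPolar C D hY hsub]
  refine exists_congr fun u => and_congr_right fun _ => ?_
  rw [eq_sub_iff_add_eq', eq_neg_iff_add_eq_zero, add_comm (Dᵀ *ᵥ u), eq_comm (a := z)]

end ConvexProcessPaper
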